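/- Let S be a finite type, α : S → ℝ, b ∈ ℝ, M ∈ ℕ, and let μ, u, ρ, c, l, σ : S → ℝ satisfy ρ m ≥ 0, σ m ≥ 0, μ m ≤ u m ≤ μ m + ρ m, and c m − σ m ≤ l m ≤ c m for all m ∈ S. Let F(h, b') denote the feasible set with cost vector h and budget b'. Suppose d_opt ∈ F(c, b) attains the maximum V* of ∑ μ m · p m over F(c, b), and d* ∈ F(l, b) attains the maximum of ∑ u m · p m over F(l, b). Let D = {m : d* m ≠ 0} be the support of d*, and for b' ∈ ℝ define V_D(b') = sup { ∑ μ m · p m | p ∈ F(c, b') and {m : p m ≠ 0} ⊆ D }. Assume there is Λ ≥ 0 such that for all δ ≥ 0, V_D(b) ≥ V_D(b + δ) − Λ · δ. Then V* − V_D(b) ≤ ∑_{m∈S} (ρ m + Λ · σ m) · d* m. -/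

import Mathlib

/-!
The optimistic problem relaxes the true one (`l ≤ c`, `μ ≤ u`), so
`V* = μ·d_opt ≤ u·d_opt ≤ u·d* ≤ μ·d* + ρ·d*`. Conversely `c ≤ l + σ`, so `d*` is feasible for the
true costs once the budget is raised by `δ = σ·d*`; hence `μ·d* ≤ V_D(b + δ) ≤ V_D(b) + Λ δ`.
-/

open Finset

variable {S : Type*} [Fintype S]

/-- Feasible set `F(h, b)` with cost vector `h` and budget `b`. -/
def Feas (α : S → ℝ) (M : ℕ) (h : S → ℝ) (b : ℝ) : Set (S → ℝ) :=
  {p | (∀ m, 0 ≤ p m ∧ p m ≤ α m) ∧ (∑ m, p m) = 1 ∧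
    (∑ m, h m * p m) ≤ b ∧ {m | p m ≠ 0}.ncard ≤ M}

/-- Optimal performance rate restricted to distributions supported on `D`. -/
noncomputable def VD (μ α : S → ℝ) (M : ℕ) (c : S → ℝ) (D : Set S) (b' : ℝ) : ℝ :=
  sSup ((fun p : S → ℝ => ∑ m, μ m * p m) ''
    {p | p ∈ Feas α M c b' ∧ {m | p m ≠ 0} ⊆ D})

theorem sum_mul_le_sum_mul_of_le {f g p : S → ℝ} (hfg : ∀ m, f m ≤ g m) (hp : ∀ m, 0 ≤ p m) :
    ∑ m, f m * p m ≤ ∑ m, g m * p m :=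
  sum_le_sum fun m _ => mul_le_mul_of_nonneg_right (hfg m) (hp m)

namespace Feas

variable {α : S → ℝ} {M : ℕ} {h h' p : S → ℝ} {b b' : ℝ}

theorem nonneg (hp : p ∈ Feas α M h b) (m : S) : 0 ≤ p m := (hp.1 m).1

theorem of_cost_le (hp : p ∈ Feas α M h b) (hcost : ∑ m, h' m * p m ≤ b') :
    p ∈ Feas α M h' b' :=
  ⟨hp.1, hp.2.1, hcost, hp.2.2.2⟩

theorem mono_cost (hp : p ∈ Feas α M h b) (hh : ∀ m, h' m ≤ h m) : p ∈ Feas α M h' b :=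
  of_cost_le hp <| (sum_mul_le_sum_mul_of_le hh (nonneg hp)).trans hp.2.2.1

theorem add_budget {σ : S → ℝ} (hp : p ∈ Feas α M h b) (hh : ∀ m, h' m ≤ h m + σ m) :
    p ∈ Feas α M h' (b + ∑ m, σ m * p m) :=
  of_cost_le hp <| calc
    ∑ m, h' m * p m ≤ ∑ m, (h m + σ m) * p m := sum_mul_le_sum_mul_of_le hh (nonneg hp)
    _ = ∑ m, h m * p m + ∑ m, σ m * p m := by simp only [add_mul, sum_add_distrib]
    _ ≤ b + ∑ m, σ m * p m := by gcongr; exact hp.2.2.1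

theorem bddAbove_image_sum_mul (μ : S → ℝ) {P : Set (S → ℝ)} (hP : P ⊆ Feas α M h b) :
    BddAbove ((fun p : S → ℝ => ∑ m, μ m * p m) '' P) := by
  refine ⟨∑ m, |μ m| * α m, ?_⟩
  rintro _ ⟨p, hp, rfl⟩
  have hα := (hP hp).1
  exact sum_le_sum fun m _ => calc
    μ m * p m ≤ |μ m| * p m := mul_le_mul_of_nonneg_right (le_abs_self _) (hα m).1
    _ ≤ |μ m| * α m := mul_le_mul_of_nonneg_left (hα m).2 (abs_nonneg _)

end Feas

theorem sum_mul_le_VD {μ α c p : S → ℝ} {M : ℕ} {D : Set S} {b : ℝ} (hp : p ∈ Feas α M c b)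
    (hD : {m | p m ≠ 0} ⊆ D) : ∑ m, μ m * p m ≤ VD μ α M c D b :=
  le_csSup (Feas.bddAbove_image_sum_mul μ fun _ hq => hq.1) ⟨p, ⟨hp, hD⟩, rfl⟩

theorem stmt_9_general (α : S → ℝ) (b : ℝ) (M : ℕ) (μ u ρ c l σ : S → ℝ)
    (hσ : ∀ m, 0 ≤ σ m)
    (hu : ∀ m, μ m ≤ u m ∧ u m ≤ μ m + ρ m)
    (hl : ∀ m, c m - σ m ≤ l m ∧ l m ≤ c m)
    (dopt : S → ℝ) (hdopt : dopt ∈ Feas α M c b)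
    (dstar : S → ℝ) (hdstar : dstar ∈ Feas α M l b)
    (hdstar_max : ∀ p ∈ Feas α M l b, ∑ m, u m * p m ≤ ∑ m, u m * dstar m)
    (Λ : ℝ)
    (hsens : ∀ δ : ℝ, 0 ≤ δ →
      VD μ α M c {m | dstar m ≠ 0} (b + δ) - Λ * δ ≤ VD μ α M c {m | dstar m ≠ 0} b) :
    (∑ m, μ m * dopt m) - VD μ α M c {m | dstar m ≠ 0} b
      ≤ ∑ m, (ρ m + Λ * σ m) * dstar m := by
  set δ := ∑ m, σ m * dstar m
  have hδ : 0 ≤ δ := sum_nonneg fun m _ => mul_nonneg (hσ m) (Feas.nonneg hdstar m)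
  have hopt : ∑ m, μ m * dopt m ≤ ∑ m, u m * dstar m :=
    (sum_mul_le_sum_mul_of_le (fun m => (hu m).1) (Feas.nonneg hdopt)).trans
      (hdstar_max dopt (Feas.mono_cost hdopt fun m => (hl m).2))
  have hstar : ∑ m, u m * dstar m ≤ ∑ m, μ m * dstar m + ∑ m, ρ m * dstar m := by
    rw [← sum_add_distrib]
    simpa only [add_mul] using sum_mul_le_sum_mul_of_le (fun m => (hu m).2) (Feas.nonneg hdstar)
  have hrelax : ∑ m, μ m * dstar m ≤ VD μ α M c {m | dstar m ≠ 0} (b + δ) :=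
    sum_mul_le_VD (Feas.add_budget hdstar fun m => by linarith [(hl m).1]) le_rfl
  have hsplit : ∑ m, (ρ m + Λ * σ m) * dstar m = ∑ m, ρ m * dstar m + Λ * δ := by
    simp only [δ, add_mul, mul_assoc, sum_add_distrib, mul_sum]
  linarith [hsens δ hδ]

theorem stmt_9 (α : S → ℝ) (b : ℝ) (M : ℕ) (μ u ρ c l σ : S → ℝ)
    (hρ : ∀ m, 0 ≤ ρ m) (hσ : ∀ m, 0 ≤ σ m)
    (hu : ∀ m, μ m ≤ u m ∧ u m ≤ μ m + ρ m)
    (hl : ∀ m, c m - σ m ≤ l m ∧ l m ≤ c m)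
    (dopt : S → ℝ) (hdopt : dopt ∈ Feas α M c b)
    (hdopt_max : ∀ p ∈ Feas α M c b, ∑ m, μ m * p m ≤ ∑ m, μ m * dopt m)
    (dstar : S → ℝ) (hdstar : dstar ∈ Feas α M l b)
    (hdstar_max : ∀ p ∈ Feas α M l b, ∑ m, u m * p m ≤ ∑ m, u m * dstar m)
    (Λ : ℝ) (hΛ : 0 ≤ Λ)
    (hsens : ∀ δ : ℝ, 0 ≤ δ →
      VD μ α M c {m | dstar m ≠ 0} (b + δ) - Λ * δ ≤ VD μ α M c {m | dstar m ≠ 0} b) :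
    (∑ m, μ m * dopt m) - VD μ α M c {m | dstar m ≠ 0} b
      ≤ ∑ m, (ρ m + Λ * σ m) * dstar m :=
  stmt_9_general α b M μ u ρ c l σ hσ hu hl dopt hdopt dstar hdstar hdstar_max Λ hsens
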